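/- Let n ≥ 6, i ≥ 5 and k ≥ 1 with i + k ≤ n − 1. Let G be the graph obtained from the cycle C_n = v_1 v_2 … v_n v_1 by adding the k + 1 chords {v_1, v_i}, {v_1, v_{i+1}}, …, {v_1, v_{i+k−1}}, and {v_2, v_{i−1}}. Then γ̄_p(G) = 0; that is, every nonempty subset of vertices of G is a power dominating set. -/

import Mathlib

/-- The closed neighborhood `N[S]` of a set `S` of vertices: `S` together with
all vertices adjacent to a vertex of `S`. -/
def closedNbhdSet {V : Type*} (G : SimpleGraph V) (S : Set V) : Set V :=
  S ∪ {v | ∃ u ∈ S, G.Adj u v}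

/-- The monitored sets `P^i(S)` for power domination:
`P^0(S) = N[S]` and
`P^{i+1}(S) = P^i(S) ∪ { w : {w} = N[v] \ P^i(S) for some v ∈ P^i(S) }`. -/
def monitored {V : Type*} (G : SimpleGraph V) (S : Set V) : ℕ → Set V
  | 0 => closedNbhdSet G S
  | i + 1 => monitored G S i ∪
      {w | ∃ v ∈ monitored G S i,
        (insert v (G.neighborSet v)) \ monitored G S i = {w}}

/-- The zero-forcing sets `Q^i(S)`:
`Q^0(S) = S` and
`Q^{i+1}(S) = Q^i(S) ∪ { w : {w} = N[v] \ Q^i(S) for some v ∈ Q^i(S) }`. -/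
def forced {V : Type*} (G : SimpleGraph V) (S : Set V) : ℕ → Set V
  | 0 => S
  | i + 1 => forced G S i ∪
      {w | ∃ v ∈ forced G S i,
        (insert v (G.neighborSet v)) \ forced G S i = {w}}

/-- `S` is a power dominating set if the monitored sets eventually cover all vertices. -/
def IsPowerDominatingSet {V : Type*} (G : SimpleGraph V) (S : Set V) : Prop :=
  ∃ i, monitored G S i = Set.univ

/-- `S` is a zero forcing set if the forcing process eventually covers all vertices. -/
def IsZeroForcingSet {V : Type*} (G : SimpleGraph V) (S : Set V) : Prop :=
  ∃ i, forced G S i = Set.univ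

/-- The failed power domination number: the maximum cardinality of a set of
vertices that is not a power dominating set. -/
noncomputable def failedPowerDominationNumber {V : Type*} (G : SimpleGraph V) : ℕ :=
  sSup {k | ∃ S : Set V, ¬ IsPowerDominatingSet G S ∧ S.ncard = k}

/-- The failed zero forcing number: the maximum cardinality of a set of
vertices that is not a zero forcing set. -/
noncomputable def failedZeroForcingNumber {V : Type*} (G : SimpleGraph V) : ℕ :=
  sSup {k | ∃ S : Set V, ¬ IsZeroForcingSet G S ∧ S.ncard = k}

/-- The cycle `C_n = v_1 v_2 … v_n v_1` (vertex `v_j` is `(j-1 : Fin n)`) together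
with the `k + 1` chords `{v_1, v_i}, {v_1, v_{i+1}}, …, {v_1, v_{i+k-1}}` and
`{v_2, v_{i-1}}`. -/
def cycleWithChordsPlusOne (n i k : ℕ) : SimpleGraph (Fin n) :=
  SimpleGraph.fromRel (fun a b =>
    ((a : ℕ) + 1) % n = (b : ℕ) ∨
    ((a : ℕ) = 0 ∧ i ≤ (b : ℕ) + 1 ∧ (b : ℕ) + 2 ≤ i + k) ∨
    ((a : ℕ) = 1 ∧ (b : ℕ) + 2 = i))

/-! Whatever `S` monitors at some stage is closed under the forcing rule, so it suffices that a
forcing-closed set `M` containing some `N[v]` is everything. Number the vertices `0, …, n - 1`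
along the cycle. If `M` contains two consecutive vertices of an arc of the cycle and every chord
neighbour of the arc's interior vertices, it contains the whole arc. The inner arc `1, …, i - 2`
and the chordless arc `i + k - 2, …, n - 1` have no chords at interior vertices, the outer arc
`i - 2, …, n - 1` only chords to `0`, and the path `1, …, n - 1` only chords to `0` and `1`.
So it is enough to get `0`, `1` and two consecutive vertices of that path into `M`. For
`v ∈ {0, 1}` these come from `N[v]` after at most one forcing step; otherwise `N[v]` contains two
consecutive vertices of the inner arc, of the outer arc together with `0`, or of the chordless
arc, and filling that arc forces whichever of `0` and `1` is missing. -/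

section

variable {V : Type*} {G : SimpleGraph V} {S M : Set V}

theorem monotone_monitored : Monotone (monitored G S) :=
  monotone_nat_of_le_succ fun _ _ hx => Or.inl hx

theorem exists_subset_monitored [Finite V] {T : Set V} (hT : T ⊆ ⋃ m, monitored G S m) :
    ∃ m, T ⊆ monitored G S m := by
  have hfin := Set.toFinite T
  rw [← hfin.coe_toFinset] at hT ⊢
  exact monotone_monitored.directed_le.exists_mem_subset_of_finset_subset_biUnion hT

def IsForcingClosed (G : SimpleGraph V) (M : Set V) : Prop :=
  ∀ ⦃v w⦄, v ∈ M → G.Adj v w → (∀ x, G.Adj v x → x ≠ w → x ∈ M) → w ∈ M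

theorem isForcingClosed_iUnion_monitored [Finite V] :
    IsForcingClosed G (⋃ m, monitored G S m) := by
  intro v w hv hvw hnbr
  obtain ⟨m, hm⟩ := exists_subset_monitored (T := insert v (G.neighborSet v \ {w}))
    (Set.insert_subset hv fun x hx => hnbr x hx.1 hx.2)
  refine Set.mem_iUnion.2 ⟨m + 1, ?_⟩
  by_cases hwm : w ∈ monitored G S m
  · exact Or.inl hwm
  refine Or.inr ⟨v, hm (Set.mem_insert v _),
    Set.eq_singleton_iff_unique_mem.2 ⟨⟨Or.inr hvw, hwm⟩, ?_⟩⟩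
  rintro x ⟨hx, hxm⟩
  by_contra hxw
  rcases hx with rfl | hx
  · exact hxm (hm (Set.mem_insert x _))
  · exact hxm (hm (Set.mem_insert_of_mem v ⟨hx, hxw⟩))

theorem IsForcingClosed.mem_of_path (hM : IsForcingClosed G M) {p : ℕ → V} {a b c : ℕ}
    (hadj : ∀ j, a ≤ j → j < b → G.Adj (p j) (p (j + 1)))
    (hnbr : ∀ j, a < j → j < b → ∀ x, G.Adj (p j) x → x ≠ p (j - 1) → x ≠ p (j + 1) →
      x ∈ M)
    (hac : a ≤ c) (hcb : c < b) (hc : p c ∈ M) (hc' : p (c + 1) ∈ M) :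
    ∀ j, a ≤ j → j ≤ b → p j ∈ M := by
  have up : ∀ j, c ≤ j → j < b → p j ∈ M ∧ p (j + 1) ∈ M := by
    intro j hcj
    induction j, hcj using Nat.le_induction with
    | base => exact fun _ => ⟨hc, hc'⟩
    | succ j hcj ih =>
      intro hjb
      obtain ⟨hj, hj'⟩ := ih (by omega)
      refine ⟨hj', hM hj' (hadj (j + 1) (by omega) hjb) fun x hx hxw => ?_⟩
      by_cases hxj : x = p j
      · exact hxj ▸ hj
      · exact hnbr (j + 1) (by omega) hjb x hx (by simpa using hxj) hxw
  have down : ∀ j, a ≤ j → j ≤ c → p j ∈ M ∧ p (j + 1) ∈ M := by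
    intro j haj hjc
    induction hjc using Nat.decreasingInduction with
    | self => exact ⟨hc, hc'⟩
    | of_succ j hjc ih =>
      obtain ⟨hj, hj'⟩ := ih (by omega)
      refine ⟨hM hj ((hadj j haj (by omega)).symm) fun x hx hxw => ?_, hj⟩
      by_cases hxj : x = p (j + 2)
      · exact hxj ▸ hj'
      · exact hnbr (j + 1) (by omega) (by omega) x hx (by simpa using hxw) hxj
  intro j haj hjb
  rcases lt_or_ge j c with hjc | hcj
  · exact (down j haj hjc.le).1
  rcases lt_or_eq_of_le hjb with hjb | rfl
  · exact (up j hcj hjb).1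
  · simpa [Nat.sub_add_cancel (show 1 ≤ j by omega)] using (up (j - 1) (by omega) (by omega)).2

theorem isPowerDominatingSet_of_nonempty [Finite V]
    (h : ∀ v M, IsForcingClosed G M → insert v (G.neighborSet v) ⊆ M → M = Set.univ)
    (hS : S.Nonempty) : IsPowerDominatingSet G S := by
  obtain ⟨v, hv⟩ := hS
  have hcover := h v _ isForcingClosed_iUnion_monitored fun x hx =>
    Set.mem_iUnion.2 ⟨0, hx.elim (fun hx => hx ▸ Or.inl hv) fun hx => Or.inr ⟨v, hv, hx⟩⟩
  obtain ⟨m, hm⟩ := exists_subset_monitored hcover.ge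
  exact ⟨m, Set.eq_univ_of_univ_subset hm⟩

theorem failedPowerDominationNumber_eq_zero
    (h : ∀ S : Set V, S.Nonempty → IsPowerDominatingSet G S) :
    failedPowerDominationNumber G = 0 := by
  refine Nat.eq_zero_of_le_zero (csSup_le' ?_)
  rintro _ ⟨S, hS, rfl⟩
  rw [Set.not_nonempty_iff_eq_empty.1 (mt (h S) hS), Set.ncard_empty]

end

namespace cycleWithChordsPlusOne

variable {n i k : ℕ}

theorem val_of_adj {a b : Fin n} (h : (cycleWithChordsPlusOne n i k).Adj a b) :
    (a : ℕ) + 1 = b ∨ (b : ℕ) + 1 = a ∨ ((a : ℕ) + 1 = n ∧ (b : ℕ) = 0) ∨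
      ((b : ℕ) + 1 = n ∧ (a : ℕ) = 0) ∨
      ((a : ℕ) = 0 ∧ i ≤ (b : ℕ) + 1 ∧ (b : ℕ) + 2 ≤ i + k) ∨
      ((b : ℕ) = 0 ∧ i ≤ (a : ℕ) + 1 ∧ (a : ℕ) + 2 ≤ i + k) ∨
      ((a : ℕ) = 1 ∧ (b : ℕ) + 2 = i) ∨ ((b : ℕ) = 1 ∧ (a : ℕ) + 2 = i) := by
  have succ_mod : ∀ x y : Fin n, ((x : ℕ) + 1) % n = y →
      (x : ℕ) + 1 = y ∨ ((x : ℕ) + 1 = n ∧ (y : ℕ) = 0) := by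
    intro x y hxy
    rcases (show (x : ℕ) + 1 ≤ n from x.isLt).lt_or_eq with hx | hx
    · exact Or.inl (by rwa [Nat.mod_eq_of_lt hx] at hxy)
    · rw [hx, Nat.mod_self] at hxy
      exact Or.inr ⟨hx, hxy.symm⟩
  obtain ⟨-, (h | h | h) | (h | h | h)⟩ := (SimpleGraph.fromRel_adj _ a b).1 h
  · rcases succ_mod a b h with h | h <;> tauto
  · tauto
  · tauto
  · rcases succ_mod b a h with h | h <;> tauto
  · tauto
  · tauto

open Fin.NatCast

variable [NeZero n]

theorem adj_natCast_succ {t : ℕ} (ht : t + 1 < n) :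
    (cycleWithChordsPlusOne n i k).Adj (t : Fin n) ((t + 1 : ℕ) : Fin n) := by
  refine (SimpleGraph.fromRel_adj _ _ _).2 ⟨fun h => ?_, Or.inl (Or.inl ?_)⟩
  · have := congrArg Fin.val h
    rw [Fin.val_cast_of_lt (by omega), Fin.val_cast_of_lt ht] at this
    omega
  · rw [Fin.val_cast_of_lt (by omega), Fin.val_cast_of_lt ht, Nat.mod_eq_of_lt ht]

theorem adj_natCast_pred_zero (hn : 2 ≤ n) :
    (cycleWithChordsPlusOne n i k).Adj ((n - 1 : ℕ) : Fin n) 0 := by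
  refine (SimpleGraph.fromRel_adj _ _ _).2 ⟨fun h => ?_, Or.inl (Or.inl ?_)⟩
  · have := congrArg Fin.val h
    rw [Fin.val_cast_of_lt (by omega), Fin.val_zero] at this
    omega
  · rw [Fin.val_cast_of_lt (by omega), Fin.val_zero, Nat.sub_add_cancel (by omega),
      Nat.mod_self]

theorem adj_zero_natCast (hi : 2 ≤ i) {t : ℕ} (ht : t < n) (hit : i ≤ t + 1)
    (hti : t + 2 ≤ i + k) : (cycleWithChordsPlusOne n i k).Adj 0 (t : Fin n) := by
  refine (SimpleGraph.fromRel_adj _ _ _).2 ⟨fun h => ?_, Or.inl (Or.inr (Or.inl ?_))⟩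
  · have := congrArg Fin.val h
    rw [Fin.val_cast_of_lt ht, Fin.val_zero] at this
    omega
  · rw [Fin.val_cast_of_lt ht, Fin.val_zero]
    exact ⟨rfl, hit, hti⟩

theorem eq_of_adj_natCast {j : ℕ} (hj : 1 ≤ j) (hjn : j + 2 ≤ n) {x : Fin n}
    (h : (cycleWithChordsPlusOne n i k).Adj j x) :
    x = ↑(j - 1) ∨ x = ↑(j + 1) ∨ (j = 1 ∧ x = ↑(i - 2)) ∨ (j = i - 2 ∧ x = 1) ∨
      (i ≤ j + 1 ∧ j + 2 ≤ i + k ∧ x = 0) := by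
  have hx := val_of_adj h
  rw [Fin.val_cast_of_lt (by omega)] at hx
  rw [← Fin.cast_val_eq_self x]
  have : (x : ℕ) = j - 1 ∨ (x : ℕ) = j + 1 ∨ (j = 1 ∧ (x : ℕ) = i - 2) ∨
      (j = i - 2 ∧ (x : ℕ) = 1) ∨ (i ≤ j + 1 ∧ j + 2 ≤ i + k ∧ (x : ℕ) = 0) := by
    omega
  rcases this with h | h | ⟨h1, h⟩ | ⟨h1, h⟩ | ⟨h1, h2, h⟩ <;> simp_all

theorem eq_of_adj_zero {x : Fin n} (h : (cycleWithChordsPlusOne n i k).Adj 0 x) :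
    x = 1 ∨ x = ↑(n - 1) ∨ (i ≤ (x : ℕ) + 1 ∧ (x : ℕ) + 2 ≤ i + k) := by
  have hx := val_of_adj h
  rw [Fin.val_zero] at hx
  rw [← Fin.cast_val_eq_self x]
  have : (x : ℕ) = 1 ∨ (x : ℕ) = n - 1 ∨ (i ≤ (x : ℕ) + 1 ∧ (x : ℕ) + 2 ≤ i + k) := by
    omega
  rcases this with h | h | h <;> simp [h]

theorem eq_of_adj_natCast_pred (hik : i + k + 1 ≤ n) {x : Fin n}
    (h : (cycleWithChordsPlusOne n i k).Adj ↑(n - 1) x) : x = ↑(n - 2) ∨ x = 0 := by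
  have hx := val_of_adj h
  rw [Fin.val_cast_of_lt (by omega)] at hx
  rw [← Fin.cast_val_eq_self x]
  have : (x : ℕ) = n - 2 ∨ (x : ℕ) = 0 := by omega
  rcases this with h | h <;> simp [h]

variable {M : Set (Fin n)} (hM : IsForcingClosed (cycleWithChordsPlusOne n i k) M)
include hM

theorem natCast_mem_of_segment {a b c : ℕ} (hbn : b < n)
    (hnbr : ∀ j, a < j → j < b → ∀ x, (cycleWithChordsPlusOne n i k).Adj j x →
      x ≠ ↑(j - 1) → x ≠ ↑(j + 1) → x ∈ M)
    (hac : a ≤ c) (hcb : c < b) (hc : (c : Fin n) ∈ M) (hc' : ((c + 1 : ℕ) : Fin n) ∈ M) :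
    ∀ t, a ≤ t → t ≤ b → (t : Fin n) ∈ M :=
  hM.mem_of_path (p := fun t : ℕ => (t : Fin n)) (fun _ _ hj => adj_natCast_succ (by omega))
    hnbr hac hcb hc hc'

theorem eq_univ_of_zero_mem_of_one_mem (h0 : 0 ∈ M) (h1 : 1 ∈ M) {c : ℕ} (hc : 1 ≤ c)
    (hcn : c + 2 ≤ n) (hcM : (c : Fin n) ∈ M) (hcM' : ((c + 1 : ℕ) : Fin n) ∈ M) :
    M = Set.univ := by
  have hseg := natCast_mem_of_segment hM (a := 1) (b := n - 1) (by omega) ?_ hc (by omega)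
    hcM hcM'
  · refine Set.eq_univ_of_forall fun x => ?_
    rcases Nat.eq_zero_or_pos x with hx | hx
    · exact Fin.val_eq_zero_iff.1 hx ▸ h0
    · exact Fin.cast_val_eq_self x ▸ hseg x hx (by omega)
  intro j hj hjn y hy hy1 hy2
  rcases eq_of_adj_natCast (by omega) (by omega) hy with
    rfl | rfl | ⟨rfl, -⟩ | ⟨-, rfl⟩ | ⟨-, -, rfl⟩
  exacts [absurd rfl hy1, absurd rfl hy2, absurd hj (by omega), h1, h0]

theorem eq_univ_of_mem_innerArc (hik : i + k + 1 ≤ n) {c : ℕ} (hc : 1 ≤ c)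
    (hci : c + 3 ≤ i) (hcM : (c : Fin n) ∈ M) (hcM' : ((c + 1 : ℕ) : Fin n) ∈ M) :
    M = Set.univ := by
  have hseg := natCast_mem_of_segment hM (a := 1) (b := i - 2) (by omega) ?_ hc (by omega)
    hcM hcM'
  · have h0 : ((0 : ℕ) : Fin n) ∈ M := by
      refine hM (hseg 1 le_rfl (by omega)) (adj_natCast_succ (by omega)).symm fun x hx hx0 => ?_
      rcases eq_of_adj_natCast le_rfl (by omega) hx with
        h | rfl | ⟨-, rfl⟩ | ⟨h, -⟩ | ⟨h, -, -⟩
      exacts [absurd h hx0, hseg 2 (by omega) (by omega), hseg (i - 2) (by omega) le_rfl,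
        absurd h (by omega), absurd h (by omega)]
    exact eq_univ_of_zero_mem_of_one_mem hM h0 (hseg 1 le_rfl (by omega)) le_rfl (by omega)
      (hseg 1 le_rfl (by omega)) (hseg 2 (by omega) (by omega))
  intro j hj hji y hy hy1 hy2
  rcases eq_of_adj_natCast (by omega) (by omega) hy with
    rfl | rfl | ⟨rfl, -⟩ | ⟨rfl, -⟩ | ⟨h, -, -⟩
  exacts [absurd rfl hy1, absurd rfl hy2, absurd hj (by omega), absurd hji (by omega),
    absurd h (by omega)]

theorem eq_univ_of_zero_mem_of_mem_outerArc (hi : 5 ≤ i) (hik : i + k + 1 ≤ n) (h0 : 0 ∈ M)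
    {c : ℕ} (hc : i ≤ c + 2) (hcn : c + 2 ≤ n) (hcM : (c : Fin n) ∈ M)
    (hcM' : ((c + 1 : ℕ) : Fin n) ∈ M) : M = Set.univ := by
  have hseg := natCast_mem_of_segment hM (a := i - 2) (b := n - 1) (by omega) ?_ (by omega)
    (by omega) hcM hcM'
  · have h1 : 1 ∈ M := by
      refine hM h0 (adj_natCast_succ (t := 0) (by omega)) fun x hx hx1 => ?_
      rcases eq_of_adj_zero hx with h | rfl | ⟨hx, hx'⟩
      exacts [absurd h hx1, hseg (n - 1) (by omega) le_rfl,
        Fin.cast_val_eq_self x ▸ hseg x (by omega) (by omega)]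
    refine eq_univ_of_zero_mem_of_one_mem hM h0 h1 (c := n - 2) (by omega) (by omega)
      (hseg (n - 2) (by omega) (by omega)) (hseg (n - 2 + 1) (by omega) (by omega))
  intro j hj hjn y hy hy1 hy2
  rcases eq_of_adj_natCast (by omega) (by omega) hy with
    rfl | rfl | ⟨rfl, -⟩ | ⟨rfl, -⟩ | ⟨-, -, rfl⟩
  exacts [absurd rfl hy1, absurd rfl hy2, absurd hj (by omega), absurd hj (by omega), h0]

theorem zero_mem_of_mem_chordlessArc (hi : 5 ≤ i) (hik : i + k + 1 ≤ n) {c : ℕ}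
    (hc : i + k ≤ c + 2) (hcn : c + 2 ≤ n) (hcM : (c : Fin n) ∈ M)
    (hcM' : ((c + 1 : ℕ) : Fin n) ∈ M) : 0 ∈ M := by
  have hseg := natCast_mem_of_segment hM (a := i + k - 2) (b := n - 1) (by omega) ?_ (by omega)
    (by omega) hcM hcM'
  · refine hM (hseg (n - 1) (by omega) le_rfl) (adj_natCast_pred_zero (by omega))
      fun x hx hx0 => ?_
    rcases eq_of_adj_natCast_pred hik hx with rfl | h
    exacts [hseg (n - 2) (by omega) (by omega), absurd h hx0]
  intro j hj hjn y hy hy1 hy2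
  rcases eq_of_adj_natCast (by omega) (by omega) hy with
    rfl | rfl | ⟨rfl, -⟩ | ⟨rfl, -⟩ | ⟨-, h, -⟩
  exacts [absurd rfl hy1, absurd rfl hy2, absurd hj (by omega), absurd hj (by omega),
    absurd h (by omega)]

theorem eq_univ_of_closedNbhd_subset (hi : 5 ≤ i) (hik : i + k + 1 ≤ n) {v : Fin n}
    (hv : insert v ((cycleWithChordsPlusOne n i k).neighborSet v) ⊆ M) : M = Set.univ := by
  obtain ⟨t, ht, rfl⟩ : ∃ t < n, (t : Fin n) = v := ⟨v, v.isLt, Fin.cast_val_eq_self v⟩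
  have hnb : ∀ x, (cycleWithChordsPlusOne n i k).Adj t x → x ∈ M := fun x hx => hv (Or.inr hx)
  cases t with
  | zero =>
    have hpred : n - 2 + 1 = n - 1 := by omega
    have hlast : ((n - 2 + 1 : ℕ) : Fin n) ∈ M :=
      hpred ▸ hnb _ (adj_natCast_pred_zero (by omega)).symm
    have hlast' : ((n - 2 : ℕ) : Fin n) ∈ M := by
      refine hM hlast (adj_natCast_succ (by omega)).symm fun x hx hx' => ?_
      rcases eq_of_adj_natCast_pred hik (hpred ▸ hx) with rfl | rfl
      exacts [absurd rfl hx', hv (Set.mem_insert _ _)]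
    exact eq_univ_of_zero_mem_of_one_mem hM (hv (Set.mem_insert _ _))
      (hnb _ (adj_natCast_succ (by omega))) (by omega) (by omega) hlast' hlast
  | succ c =>
    have hc : (c : Fin n) ∈ M := hnb _ (adj_natCast_succ ht).symm
    have hc' : ((c + 1 : ℕ) : Fin n) ∈ M := hv (Set.mem_insert _ _)
    rcases (by omega : c = 0 ∨ (1 ≤ c ∧ c + 3 ≤ i) ∨ (i ≤ c + 2 ∧ c + 3 ≤ i + k) ∨
        i + k ≤ c + 2) with rfl | ⟨hc1, hci⟩ | ⟨hic, hci⟩ | hic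
    · exact eq_univ_of_zero_mem_of_one_mem hM hc hc' le_rfl (by omega) hc'
        (hnb _ (adj_natCast_succ (by omega)))
    · exact eq_univ_of_mem_innerArc hM hik hc1 hci hc hc'
    · have h0 : 0 ∈ M := hnb 0 (adj_zero_natCast (by omega) ht (by omega) (by omega)).symm
      exact eq_univ_of_zero_mem_of_mem_outerArc hM hi hik h0 hic (by omega) hc hc'
    · have h0 := zero_mem_of_mem_chordlessArc hM hi hik hic (by omega) hc hc'
      exact eq_univ_of_zero_mem_of_mem_outerArc hM hi hik h0 (by omega) (by omega) hc hc'

end cycleWithChordsPlusOne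

theorem failedPowerDominationNumber_cycleWithChordsPlusOne_general
    (n i k : ℕ) (hi : 5 ≤ i) (hik : i + k + 1 ≤ n) :
    failedPowerDominationNumber (cycleWithChordsPlusOne n i k) = 0 := by
  have : NeZero n := ⟨by omega⟩
  exact failedPowerDominationNumber_eq_zero fun _ => isPowerDominatingSet_of_nonempty
    fun _ _ hM hv => cycleWithChordsPlusOne.eq_univ_of_closedNbhd_subset hM hi hik hv

theorem failedPowerDominationNumber_cycleWithChordsPlusOne
    (n i k : ℕ) (hn : 6 ≤ n) (hi : 5 ≤ i) (hk : 1 ≤ k) (hik : i + k + 1 ≤ n) :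
    failedPowerDominationNumber (cycleWithChordsPlusOne n i k) = 0 :=
  failedPowerDominationNumber_cycleWithChordsPlusOne_general n i k hi hik
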